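/- arXiv:1412.2362 — 2 statements merged into one kernel-verified Lean document; each statement's English description precedes it below -/
import Mathlib

section
/- The group G = ⟨a, b ∣ a⁻¹bab⁻¹ab⁻¹ = 1⟩ is nonabelian; equivalently, it does not satisfy ab = ba. -/
/-- The relator `a⁻¹ b a b⁻¹ a b⁻¹` in the free group on two generators. -/
def rel0 : FreeGroup (Fin 2) :=
  (FreeGroup.of 0)⁻¹ * FreeGroup.of 1 * FreeGroup.of 0 * (FreeGroup.of 1)⁻¹ *
    FreeGroup.of 0 * (FreeGroup.of 1)⁻¹

/-- A target assignment in `S₄` satisfying the relation. -/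
def f0 : Fin 2 → Equiv.Perm (Fin 4) := ![Equiv.swap 2 3, Equiv.swap 1 2]

lemma hrel : ∀ r ∈ ({rel0} : Set (FreeGroup (Fin 2))), FreeGroup.lift f0 r = 1 := by
  intro r hr
  rw [Set.mem_singleton_iff] at hr
  subst hr
  show FreeGroup.lift f0 ((FreeGroup.of 0)⁻¹ * FreeGroup.of 1 * FreeGroup.of 0 *
    (FreeGroup.of 1)⁻¹ * FreeGroup.of 0 * (FreeGroup.of 1)⁻¹) = 1
  simp only [map_mul, map_inv, FreeGroup.lift_apply_of]
  decide

/-- The group `G = ⟨a, b ∣ a⁻¹bab⁻¹ab⁻¹⟩` is nonabelian: `ab ≠ ba`. -/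
theorem stmt0 :
    (PresentedGroup.of (rels := ({rel0} : Set (FreeGroup (Fin 2)))) 0) *
      (PresentedGroup.of (rels := ({rel0} : Set (FreeGroup (Fin 2)))) 1) ≠
    (PresentedGroup.of (rels := ({rel0} : Set (FreeGroup (Fin 2)))) 1) *
      (PresentedGroup.of (rels := ({rel0} : Set (FreeGroup (Fin 2)))) 0) := by
  intro h
  have := congrArg (PresentedGroup.toGroup hrel) h
  simp only [map_mul, PresentedGroup.toGroup.of] at this
  revert this
  decide
end

section
/- Let D be a Gauss diagram and D' a diagram obtained from D by deleting a subset of its chords. Then the bridge number of D' is at most the bridge number of D (with the convention that a diagram with no tails has bridge number 1). -/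
/-- Number of starting points of maximal cyclic runs of tail-labeled points in a
cyclic sequence of head/tail labels (`true` = tail, `false` = head): position `i`
starts a tail run when it carries a tail and its cyclic predecessor carries a head. -/
def tailRunStarts (l : List Bool) : ℕ :=
  ((List.range l.length).filter fun i =>
    l.getD i false = true ∧ l.getD ((i + (l.length - 1)) % l.length) false = false).length

/-- The bridge number of a cyclic sequence of endpoint labels, with the convention
that a diagram with no tail/head alternation (e.g. no chords) has bridge number 1. -/
def bridgeNum (l : List Bool) : ℕ :=
  if tailRunStarts l = 0 then 1 else tailRunStarts l

/-! A tail run starts exactly at a cyclically adjacent (head, tail) pair, so the number of runs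
is the number of ascents `false, true` of the cyclic word. Ascents obey the triangle inequality
`ascent a c ≤ ascent a b + ascent b c`, so deleting letters from a word with fixed ends cannot
create ascents. Closing the cycle of `l'` through the last letter `z` of `l`, as `z :: l' ++ [z]`,
can only overcount the cyclic ascents of `l'` (triangle inequality once more), and this word is a
subword of `z :: l ++ [z]`, whose ascents are exactly the cyclic ascents of `l`. -/

def ascents : List Bool → ℕ
  | a :: b :: t => (!a && b).toNat + ascents (b :: t)
  | _ => 0

theorem ascent_le_add (a b c : Bool) : (!a && c).toNat ≤ (!a && b).toNat + (!b && c).toNat := by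
  cases a <;> cases b <;> cases c <;> decide

theorem ascents_cons (a : Bool) (t : List Bool) :
    ascents (a :: t) = (!a && t.getD 0 false).toNat + ascents t := by
  cases t <;> simp [ascents]

theorem ascents_cons_le_cons_cons (a b : Bool) (l : List Bool) :
    ascents (a :: l) ≤ ascents (a :: b :: l) := by
  cases l with
  | nil => simp [ascents]
  | cons c l =>
    have := ascent_le_add a b c
    simp only [ascents]
    omega

theorem List.Sublist.ascents_cons_le {l₁ l₂ : List Bool} (h : l₁.Sublist l₂) (a : Bool) :
    ascents (a :: l₁) ≤ ascents (a :: l₂) := by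
  induction h generalizing a with
  | slnil => rfl
  | cons b _ ih => exact (ih a).trans (ascents_cons_le_cons_cons a b _)
  | cons_cons b _ ih => simpa only [ascents] using Nat.add_le_add_left (ih b) _

theorem ascents_cons_append_singleton (a b : Bool) (l : List Bool) :
    ascents (a :: l ++ [b]) = ascents (a :: l) + (!l.getLastD a && b).toNat := by
  induction l generalizing a with
  | nil => simp [ascents]
  | cons c l ih =>
    simp only [List.cons_append, ascents, List.getLastD_cons] at ih ⊢
    rw [ih]
    omega

theorem ascents_eq_length_filter (m : List Bool) :
    ascents m = ((List.range m.length).filter fun j =>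
      m.getD (j + 1) false = true ∧ m.getD j false = false).length := by
  induction m with
  | nil => rfl
  | cons a t ih =>
    have hshift : ((List.range t.length).map Nat.succ).filter (fun j =>
        (a :: t).getD (j + 1) false = true ∧ (a :: t).getD j false = false) =
        (((List.range t.length).filter fun j =>
          t.getD (j + 1) false = true ∧ t.getD j false = false)).map Nat.succ := by
      simp [List.filter_map, Function.comp_def]
    rw [List.length_cons, List.range_succ_eq_map, List.filter_cons, hshift, ascents_cons, ih]
    simp only [List.getD_cons_succ, List.getD_cons_zero, zero_add]
    cases a <;> cases t.getD 0 false <;> simp [add_comm]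

theorem List.getD_length_sub_one {α : Type*} (l : List α) (d : α) :
    l.getD (l.length - 1) d = l.getLastD d := by
  rcases l.eq_nil_or_concat' with rfl | ⟨s, z, rfl⟩
  · rfl
  · simp

theorem List.getD_add_length_sub_one_mod {α : Type*} (l : List α) (d : α) {i : ℕ}
    (hi : i < l.length) :
    l.getD ((i + (l.length - 1)) % l.length) d = (l.getLastD d :: l).getD i d := by
  cases i with
  | zero => rw [zero_add, Nat.mod_eq_of_lt (by omega), l.getD_length_sub_one]; rfl
  | succ j =>
    rw [show j + 1 + (l.length - 1) = j + l.length by omega, Nat.add_mod_right,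
      Nat.mod_eq_of_lt (by omega)]
    rfl

-- Prepending the last letter closes the cycle.
def cyclicAscents (l : List Bool) : ℕ := ascents (l.getLastD false :: l)

theorem tailRunStarts_eq_cyclicAscents (l : List Bool) : tailRunStarts l = cyclicAscents l := by
  rw [cyclicAscents, ascents_eq_length_filter, List.length_cons, List.range_succ,
    List.filter_append, tailRunStarts]
  simp only [List.getD_cons_succ]
  rw [List.filter_congr fun i hi => by
    rw [l.getD_add_length_sub_one_mod false (List.mem_range.mp hi)]]
  simp

theorem cyclicAscents_le_ascents (l : List Bool) (x : Bool) :
    cyclicAscents l ≤ ascents (x :: l ++ [x]) := by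
  cases l with
  | nil => exact Nat.zero_le _
  | cons h t =>
    have := ascent_le_add (t.getLastD h) x h
    rw [ascents_cons_append_singleton, cyclicAscents]
    simp only [ascents, List.getLastD_cons]
    omega

theorem cyclicAscents_eq_ascents_cons_append (l : List Bool) :
    cyclicAscents l = ascents (l.getLastD false :: l ++ [l.getLastD false]) := by
  rw [ascents_cons_append_singleton, cyclicAscents]
  cases l <;> simp only [List.getLastD_cons, List.getLastD_nil] <;> simp

theorem List.Sublist.cyclicAscents_le {l₁ l₂ : List Bool} (h : l₁.Sublist l₂) :
    cyclicAscents l₁ ≤ cyclicAscents l₂ :=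
  calc cyclicAscents l₁ ≤ ascents (l₂.getLastD false :: l₁ ++ [l₂.getLastD false]) :=
        cyclicAscents_le_ascents l₁ _
    _ ≤ _ := (h.append_right _).ascents_cons_le _
    _ = cyclicAscents l₂ := (cyclicAscents_eq_ascents_cons_append l₂).symm

theorem bridgeNum_eq_max (l : List Bool) : bridgeNum l = max 1 (tailRunStarts l) := by
  unfold bridgeNum
  split_ifs <;> omega

/-- Deleting chords (removing their endpoints, hence passing to a subsequence of
the cyclic sequence of labeled endpoints) does not increase the bridge number. -/
theorem stmt9 (l l' : List Bool) (h : l'.Sublist l) :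
    bridgeNum l' ≤ bridgeNum l := by
  simp only [bridgeNum_eq_max, tailRunStarts_eq_cyclicAscents]
  exact max_le_max le_rfl h.cyclicAscents_le
end
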